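/- The transformation s₀ is an involution: for every point (ε, q, p, x) with p_j ≠ 0 and q_j p_j ≠ ε_{j+3} for all j, Q₁ ≠ 0, Q₁ + ε₃ ≠ 0, and x_i ≠ 0 for all i, applying s₀ twice returns the original point. -/

import Mathlib

open Finset

noncomputable section

/-- A point `(ε, q, p, x) ∈ ℂ^{n+3} × ℂⁿ × ℂⁿ × ℂⁿ`, where `n = m + 2` (so `n ≥ 2`).
Indices are 0-based: `e ⟨j-1,_⟩` is the paper's `ε_j`, etc. -/
structure GPt (m : ℕ) where
  e : Fin (m + 5) → ℂ
  q : Fin (m + 2) → ℂ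
  p : Fin (m + 2) → ℂ
  x : Fin (m + 2) → ℂ

namespace GPt

variable {m : ℕ}

/-- `Q₁ = Σ_{l=1}^n q_l p_l + (1 − Σ_{l=1}^{n+3} ε_l)/2`. -/
def Q1 (P : GPt m) : ℂ := (∑ l, P.q l * P.p l) + (1 - ∑ j, P.e j) / 2

/-- `Q₂ = Σ_{j=1}^n q_j − 1`. -/
def Q2 (P : GPt m) : ℂ := (∑ j, P.q j) - 1

/-- The index of `ε_{j+3}` (paper numbering) for `j` indexing `q, p, x`. -/
def eIdx (j : Fin (m + 2)) : Fin (m + 5) := ⟨j.val + 3, by omega⟩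

/-- The transformation `s₀`. -/
def s0 (P : GPt m) : GPt m where
  e := fun j => if j = 0 then 1 - P.e 1 else if j = 1 then 1 - P.e 0 else P.e j
  q := fun j => P.p j * (P.q j * P.p j - P.e (eIdx j)) / (P.Q1 * (P.Q1 + P.e 2))
  p := fun j => -(P.Q1 * (P.Q1 + P.e 2)) / P.p j
  x := fun i => 1 / P.x i

/-- The transformation `s₁`. -/
def s1 (P : GPt m) : GPt m where
  e := fun j => P.e (Equiv.swap 0 1 j)
  q := fun j => P.q j / P.x j
  p := fun j => P.x j * P.p j
  x := fun i => 1 / P.x i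

/-- The transformation `s₂`. -/
def s2 (P : GPt m) : GPt m where
  e := fun j => P.e (Equiv.swap 1 2 j)
  q := fun j => P.q j / P.Q2
  p := fun j => (P.p j - P.Q1) * P.Q2
  x := fun i => P.x i / (P.x i - 1)

/-- The transformation `s₃`. -/
def s3 (P : GPt m) : GPt m where
  e := fun j => P.e (Equiv.swap 2 3 j)
  q := fun j => if j = 0 then 1 / P.q 0 else -P.q j / P.q 0
  p := fun j => if j = 0 then -(P.q 0 * P.Q1) else -(P.q 0 * P.p j)
  x := fun i => if i = 0 then 1 / P.x 0 else P.x i / P.x 0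

/-- The transformation `s_k` for `4 ≤ k ≤ n+2`: `ε_k ↔ ε_{k+1}` together with
`(q_{k-3}, p_{k-3}, x_{k-3}) ↔ (q_{k-2}, p_{k-2}, x_{k-2})` (paper numbering). -/
def sMid (k : ℕ) (h : 4 ≤ k ∧ k ≤ m + 4) (P : GPt m) : GPt m where
  e := fun j => P.e (Equiv.swap ⟨k - 1, by omega⟩ ⟨k, by omega⟩ j)
  q := fun j => P.q (Equiv.swap ⟨k - 4, by omega⟩ ⟨k - 3, by omega⟩ j)
  p := fun j => P.p (Equiv.swap ⟨k - 4, by omega⟩ ⟨k - 3, by omega⟩ j)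
  x := fun j => P.x (Equiv.swap ⟨k - 4, by omega⟩ ⟨k - 3, by omega⟩ j)

/-- The transformation `s_{n+3}`: `ε_{n+3} ↦ −ε_{n+3}`, `p_n ↦ p_n − ε_{n+3}/q_n`. -/
def sLast (P : GPt m) : GPt m where
  e := Function.update P.e ⟨m + 4, by omega⟩ (-(P.e ⟨m + 4, by omega⟩))
  q := P.q
  p := Function.update P.p (Fin.last (m + 1))
    (P.p (Fin.last (m + 1)) - P.e ⟨m + 4, by omega⟩ / P.q (Fin.last (m + 1)))
  x := P.x

/-- The family `s_k`, `k = 0, 1, …, n+3` (junk value `id` for `k > n+3`). -/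
def s (k : ℕ) (P : GPt m) : GPt m :=
  if k = 0 then P.s0
  else if k = 1 then P.s1
  else if k = 2 then P.s2
  else if k = 3 then P.s3
  else if h : 4 ≤ k ∧ k ≤ m + 4 then sMid k h P
  else if k = m + 5 then P.sLast
  else P

/-- The nonvanishing, at a given point, of all denominators occurring in `s_k`. -/
def Dfd (k : ℕ) (P : GPt m) : Prop :=
  if k = 0 then
    (∀ j, P.p j ≠ 0) ∧ P.Q1 ≠ 0 ∧ P.Q1 + P.e 2 ≠ 0 ∧ (∀ i, P.x i ≠ 0)
  else if k = 1 then ∀ i, P.x i ≠ 0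
  else if k = 2 then P.Q2 ≠ 0 ∧ ∀ i, P.x i ≠ 1
  else if k = 3 then P.q 0 ≠ 0 ∧ P.x 0 ≠ 0
  else if k = m + 5 then P.q (Fin.last (m + 1)) ≠ 0
  else True

/-- Apply `s_{k₁}, s_{k₂}, …` in succession. -/
def chain : List ℕ → GPt m → GPt m
  | [], P => P
  | k :: ks, P => chain ks (s k P)

/-- All denominators occurring in the successive application of
`s_{k₁}, s_{k₂}, …` are nonzero. -/
def chainDfd : List ℕ → GPt m → Prop
  | [], _ => True
  | k :: ks, P => Dfd k P ∧ chainDfd ks (s k P)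

end GPt

open GPt

/-! Since `s₀` sends each product `q_j p_j` to `ε_{j+3} - q_j p_j` and swaps `ε₁, ε₂` for
`1 - ε₂, 1 - ε₁`, it sends `Q₁` to `-(Q₁ + ε₃)`. Hence the denominator `Q₁(Q₁ + ε₃)` of `s₀` is
`s₀`-invariant, and with it every coordinate returns to its value after two steps. -/

namespace GPt

variable {m : ℕ}

@[ext]
lemma ext {P Q : GPt m} (he : P.e = Q.e) (hq : P.q = Q.q) (hp : P.p = Q.p) (hx : P.x = Q.x) :
    P = Q := by
  cases P; cases Q; congr

lemma sum_univ_eq_add_sum_eIdx {M : Type*} [AddCommMonoid M] (f : Fin (m + 5) → M) :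
    ∑ j, f j = f 0 + f 1 + f 2 + ∑ j : Fin (m + 2), f (eIdx j) := by
  simp only [Fin.sum_univ_succ, add_assoc]
  rfl

variable (P : GPt m)

@[simp] lemma s0_e_zero : P.s0.e 0 = 1 - P.e 1 := rfl

@[simp] lemma s0_e_one : P.s0.e 1 = 1 - P.e 0 := rfl

@[simp] lemma s0_e_two : P.s0.e 2 = P.e 2 := rfl

@[simp] lemma s0_e_eIdx (j : Fin (m + 2)) : P.s0.e (eIdx j) = P.e (eIdx j) := rfl

lemma s0_s0_e : P.s0.s0.e = P.e := by
  ext j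
  by_cases h0 : j = 0
  · subst h0; simp
  by_cases h1 : j = 1
  · subst h1; simp
  simp only [s0, if_neg h0, if_neg h1]

lemma s0_s0_x : P.s0.s0.x = P.x := by
  ext i
  exact one_div_one_div (P.x i)

lemma s0_q_mul_s0_p (hp : ∀ j, P.p j ≠ 0) (hD : P.Q1 * (P.Q1 + P.e 2) ≠ 0) (j : Fin (m + 2)) :
    P.s0.q j * P.s0.p j = P.e (eIdx j) - P.q j * P.p j := by
  simp only [s0]
  generalize P.Q1 * (P.Q1 + P.e 2) = D at hD ⊢
  field_simp [hp j]
  ring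

lemma Q1_s0 (hp : ∀ j, P.p j ≠ 0) (hD : P.Q1 * (P.Q1 + P.e 2) ≠ 0) :
    P.s0.Q1 = -(P.Q1 + P.e 2) := by
  simp only [Q1]
  rw [sum_congr rfl fun j _ => s0_q_mul_s0_p P hp hD j, sum_univ_eq_add_sum_eIdx P.s0.e,
    sum_univ_eq_add_sum_eIdx P.e, sum_sub_distrib]
  simp only [s0_e_zero, s0_e_one, s0_e_two, s0_e_eIdx]
  ring

lemma s0_denom (hp : ∀ j, P.p j ≠ 0) (hD : P.Q1 * (P.Q1 + P.e 2) ≠ 0) :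
    P.s0.Q1 * (P.s0.Q1 + P.s0.e 2) = P.Q1 * (P.Q1 + P.e 2) := by
  rw [Q1_s0 P hp hD, s0_e_two]
  ring

lemma s0_s0_p (hp : ∀ j, P.p j ≠ 0) (hD : P.Q1 * (P.Q1 + P.e 2) ≠ 0) : P.s0.s0.p = P.p := by
  ext j
  change -(P.s0.Q1 * (P.s0.Q1 + P.s0.e 2)) / (-(P.Q1 * (P.Q1 + P.e 2)) / P.p j) = P.p j
  rw [s0_denom P hp hD]
  generalize P.Q1 * (P.Q1 + P.e 2) = D at hD ⊢
  field_simp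

lemma s0_s0_q (hp : ∀ j, P.p j ≠ 0) (hD : P.Q1 * (P.Q1 + P.e 2) ≠ 0) : P.s0.s0.q = P.q := by
  ext j
  change P.s0.p j * (P.s0.q j * P.s0.p j - P.e (eIdx j)) / (P.s0.Q1 * (P.s0.Q1 + P.s0.e 2))
    = P.q j
  rw [s0_q_mul_s0_p P hp hD, s0_denom P hp hD]
  simp only [s0]
  generalize P.Q1 * (P.Q1 + P.e 2) = D at hD ⊢
  field_simp [hp j]
  ring

end GPt

theorem s0_involution (m : ℕ) (P : GPt m)
    (hp : ∀ j, P.p j ≠ 0)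
    (hQ1 : P.Q1 ≠ 0)
    (hQ1e : P.Q1 + P.e 2 ≠ 0) :
    P.s0.s0 = P := by
  have hD := mul_ne_zero hQ1 hQ1e
  ext1
  exacts [s0_s0_e P, s0_s0_q P hp hD, s0_s0_p P hp hD, s0_s0_x P]
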